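/- arXiv:2210.15008 — 5 statements merged into one kernel-verified Lean document; each statement's English description precedes it below -/
import Mathlib

section
/- Let p, k be positive integers, let s ⊆ {1,…,p} with |s| ≤ k, and let h ∈ ℝ^p satisfy ‖h_{s^c}‖₁ ≤ 3‖h_s‖₁. Then ‖h‖₁ ≤ 4√k ‖h‖₂. -/
/-- If `|s| ≤ k` and `h` satisfies the cone condition `‖h_{sᶜ}‖₁ ≤ 3‖h_s‖₁`, then
`‖h‖₁ ≤ 4√k ‖h‖₂`. -/
theorem l1_le_four_sqrt_k_l2 (p k : ℕ) (hp : 0 < p) (hk : 0 < k)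
    (s : Finset (Fin p)) (hs : s.card ≤ k) (h : Fin p → ℝ)
    (hcone : ∑ j ∈ sᶜ, |h j| ≤ 3 * ∑ j ∈ s, |h j|) :
    ∑ j, |h j| ≤ 4 * Real.sqrt k * Real.sqrt (∑ j, (h j) ^ 2) := by
  have hsplit : ∑ j, |h j| = ∑ j ∈ s, |h j| + ∑ j ∈ sᶜ, |h j| :=
    (Finset.sum_add_sum_compl s _).symm
  have h1 : ∑ j, |h j| ≤ 4 * ∑ j ∈ s, |h j| := by
    rw [hsplit]; linarith
  have hCS : ∑ j ∈ s, |h j| ≤ Real.sqrt s.card * Real.sqrt (∑ j ∈ s, (h j) ^ 2) := by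
    have h2 : (∑ j ∈ s, |h j|) ^ 2 ≤ s.card * ∑ j ∈ s, |h j| ^ 2 :=
      sq_sum_le_card_mul_sum_sq
    have := Real.sqrt_le_sqrt h2
    rwa [Real.sqrt_sq (Finset.sum_nonneg fun j _ => abs_nonneg _),
      Real.sqrt_mul (by positivity),
      (by simp [sq_abs] : ∑ j ∈ s, |h j| ^ 2 = ∑ j ∈ s, (h j) ^ 2)] at this
  have hle1 : Real.sqrt s.card ≤ Real.sqrt k := by
    exact Real.sqrt_le_sqrt (by exact_mod_cast hs)
  have hle2 : Real.sqrt (∑ j ∈ s, (h j) ^ 2) ≤ Real.sqrt (∑ j, (h j) ^ 2) := by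
    apply Real.sqrt_le_sqrt
    exact Finset.sum_le_sum_of_subset_of_nonneg (Finset.subset_univ s)
      (fun j _ _ => sq_nonneg _)
  calc ∑ j, |h j| ≤ 4 * ∑ j ∈ s, |h j| := h1
    _ ≤ 4 * (Real.sqrt s.card * Real.sqrt (∑ j ∈ s, (h j) ^ 2)) := by linarith
    _ ≤ 4 * (Real.sqrt k * Real.sqrt (∑ j, (h j) ^ 2)) := by
        apply mul_le_mul_of_nonneg_left _ (by norm_num)
        exact mul_le_mul hle1 hle2 (Real.sqrt_nonneg _) (Real.sqrt_nonneg _)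
    _ = 4 * Real.sqrt k * Real.sqrt (∑ j, (h j) ^ 2) := by ring
end

section
/- (Deterministic form of Theorem 1.1.) Let (x_i, y_i), i = 1,…,n, be data with x_i ∈ ℝ^p and y_i ∈ Y, and let f : ℝ × Y → ℝ be differentiable in its first argument with derivative ∂f and satisfy the convexity inequality f(t₂, y) − f(t₁, y) ≥ ∂f(t₁, y)(t₂ − t₁) for all t₁, t₂ ∈ ℝ and y ∈ Y. Let L(β) = (1/n)Σ_{i=1}^n f(⟨x_i, β⟩, y_i) and S(β) = (1/n)Σ_{i=1}^n ∂f(⟨x_i, β⟩, y_i) x_i. Let β* ∈ ℝ^p with support s = {j : β*_j ≠ 0} of cardinality at most k, let λ ≥ 0, and assume: (i) ‖S(β*)‖_∞ ≤ λ; (ii) (restricted strong convexity) there exists τ > 0 such that L(β* + h) − L(β*) − ⟨S(β*), h⟩ ≥ τ‖h‖₂² for every h ∈ ℝ^p with ‖h_{s^c}‖₁ ≤ ‖h_s‖₁ and ‖h‖₁ ≤ 2‖β*‖₁; (iii) β̂ satisfies ‖S(β̂)‖_∞ ≤ λ and ‖β̂‖₁ ≤ ‖β‖₁ for every β with ‖S(β)‖_∞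 ≤ λ. Then ‖β̂ − β*‖₂ ≤ (4√k/τ)λ and ‖β̂ − β*‖₁ ≤ (8k/τ)λ. -/
private lemma mull_swap_sum {n p : ℕ} (c : ℝ) (a : Fin n → ℝ)
    (X : Fin n → Fin p → ℝ) (u v : Fin p → ℝ) :
    ∑ j, (c * ∑ i, a i * X i j) * (u j - v j)
      = c * ∑ i, a i * ((∑ j, X i j * u j) - ∑ j, X i j * v j) := by
  calc ∑ j, (c * ∑ i, a i * X i j) * (u j - v j)
      = ∑ j, ∑ i, c * (a i * X i j * (u j - v j)) := by
        apply Finset.sum_congr rfl; intro j _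
        rw [Finset.mul_sum, Finset.sum_mul]
        apply Finset.sum_congr rfl; intros; ring
    _ = ∑ i, ∑ j, c * (a i * X i j * (u j - v j)) := Finset.sum_comm
    _ = c * ∑ i, a i * ((∑ j, X i j * u j) - ∑ j, X i j * v j) := by
        rw [Finset.mul_sum]
        apply Finset.sum_congr rfl; intro i _
        have e1 : ∑ j, c * (a i * X i j * (u j - v j))
            = c * (a i * ∑ j, X i j * (u j - v j)) := by
          rw [Finset.mul_sum, Finset.mul_sum]
          apply Finset.sum_congr rfl; intros; ring
        rw [e1]
        congr 1
        congr 1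
        rw [← Finset.sum_sub_distrib]
        apply Finset.sum_congr rfl; intros; ring

/-- Deterministic form of Theorem 1.1: error bounds for the MULL estimator without
measurement errors.  Here `L` is the empirical loss, `S` its gradient, `β*` is
`k`-sparse with support `s`, `β*` is feasible (`‖S(β*)‖_∞ ≤ λ`), the restricted strong
convexity condition holds with curvature `τ > 0`, and `β̂` is a feasible point of
minimal ℓ1 norm.  Then `‖β̂ − β*‖₂ ≤ (4√k/τ)λ` and `‖β̂ − β*‖₁ ≤ (8k/τ)λ`. -/
theorem mull_error_bounds_noiseless {Y : Type*} (n p k : ℕ)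
    (hn : 0 < n) (hp : 0 < p) (hk : 0 < k)
    (x : Fin n → Fin p → ℝ) (y : Fin n → Y) (f df : ℝ → Y → ℝ)
    (hderiv : ∀ (z : Y) (t : ℝ), HasDerivAt (fun u => f u z) (df t z) t)
    (hconv : ∀ (z : Y) (t₁ t₂ : ℝ), f t₂ z - f t₁ z ≥ df t₁ z * (t₂ - t₁))
    (L : (Fin p → ℝ) → ℝ) (S : (Fin p → ℝ) → Fin p → ℝ)
    (hL : ∀ β, L β = (1 / n) * ∑ i, f (∑ j, x i j * β j) (y i))
    (hS : ∀ β j, S β j = (1 / n) * ∑ i, df (∑ j', x i j' * β j') (y i) * x i j)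
    (βstar βhat : Fin p → ℝ) (lam τ : ℝ) (hlam : 0 ≤ lam) (hτ : 0 < τ)
    (hsupp : (Finset.univ.filter (fun j => βstar j ≠ 0)).card ≤ k)
    (hfeas : ∀ j, |S βstar j| ≤ lam)
    (hrsc : ∀ h : Fin p → ℝ,
      (∑ j ∈ (Finset.univ.filter (fun j => βstar j ≠ 0))ᶜ, |h j| ≤
        ∑ j ∈ Finset.univ.filter (fun j => βstar j ≠ 0), |h j|) →
      (∑ j, |h j|) ≤ 2 * ∑ j, |βstar j| →
      L (βstar + h) - L βstar - (∑ j, S βstar j * h j) ≥ τ * ∑ j, (h j) ^ 2)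
    (hhatfeas : ∀ j, |S βhat j| ≤ lam)
    (hhatmin : ∀ β : Fin p → ℝ, (∀ j, |S β j| ≤ lam) → ∑ j, |βhat j| ≤ ∑ j, |β j|) :
    Real.sqrt (∑ j, (βhat j - βstar j) ^ 2) ≤ (4 * Real.sqrt k / τ) * lam ∧
      ∑ j, |βhat j - βstar j| ≤ (8 * k / τ) * lam := by
  classical
  set s : Finset (Fin p) := Finset.univ.filter (fun j => βstar j ≠ 0) with hs
  set h : Fin p → ℝ := fun j => βhat j - βstar j with hh
  -- convexity of L
  have key : ∀ β₁ β₂ : (Fin p → ℝ), L β₂ - L β₁ ≥ ∑ j, S β₁ j * (β₂ j - β₁ j) := by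
    intro β₁ β₂
    have e : ∑ j, S β₁ j * (β₂ j - β₁ j)
        = (1 / n : ℝ) * ∑ i, df (∑ j', x i j' * β₁ j') (y i) *
            ((∑ j, x i j * β₂ j) - (∑ j, x i j * β₁ j)) := by
      simp only [hS]
      exact mull_swap_sum (1 / n) (fun i => df (∑ j', x i j' * β₁ j') (y i)) x β₂ β₁
    rw [hL, hL, e, ← mul_sub, ← Finset.sum_sub_distrib]
    have hn' : (0:ℝ) ≤ 1 / n := by positivity
    apply mul_le_mul_of_nonneg_left _ hn'
    exact Finset.sum_le_sum fun i _ => hconv (y i) _ _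
  -- βhat has smaller ℓ1 norm
  have hl1 : ∑ j, |βhat j| ≤ ∑ j, |βstar j| := hhatmin βstar hfeas
  have hstar0 : ∀ j ∈ sᶜ, βstar j = 0 := by
    intro j hj
    simpa [hs] using (Finset.mem_compl.mp hj)
  have hstar_sum : ∑ j, |βstar j| = ∑ j ∈ s, |βstar j| := by
    have hz : ∑ j ∈ sᶜ, |βstar j| = 0 :=
      Finset.sum_eq_zero (fun j hj => by rw [hstar0 j hj]; simp)
    rw [← Finset.sum_add_sum_compl s, hz, add_zero]
  -- cone condition
  have hcone : ∑ j ∈ sᶜ, |h j| ≤ ∑ j ∈ s, |h j| := by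
    have e1 : ∑ j ∈ sᶜ, |h j| = ∑ j ∈ sᶜ, |βhat j| := by
      apply Finset.sum_congr rfl
      intro j hj; rw [hh]; simp [hstar0 j hj]
    have e2 : ∀ j ∈ s, |βstar j| - |h j| ≤ |βhat j| := by
      intro j _
      have t1 := abs_sub_abs_le_abs_sub (βstar j) (βhat j)
      have t2 : |βstar j - βhat j| = |h j| := by rw [hh]; rw [abs_sub_comm]
      simp only [hh] at t2 ⊢
      linarith [t1, t2.le, t2.ge]
    have e3 : ∑ j ∈ s, (|βstar j| - |h j|) ≤ ∑ j ∈ s, |βhat j| :=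
      Finset.sum_le_sum e2
    have e4 : ∑ j ∈ s, |βhat j| + ∑ j ∈ sᶜ, |βhat j| = ∑ j, |βhat j| :=
      Finset.sum_add_sum_compl s _
    rw [Finset.sum_sub_distrib] at e3
    rw [e1]
    rw [hstar_sum] at hl1
    linarith
  -- ℓ1 bound needed for RSC
  have hl1h : ∑ j, |h j| ≤ 2 * ∑ j, |βstar j| := by
    have hb : ∀ j, |h j| ≤ |βhat j| + |βstar j| := by
      intro j; rw [hh]; exact abs_sub (βhat j) (βstar j)
    calc ∑ j, |h j| ≤ ∑ j, (|βhat j| + |βstar j|) :=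
          Finset.sum_le_sum fun j _ => hb j
      _ = ∑ j, |βhat j| + ∑ j, |βstar j| := Finset.sum_add_distrib
      _ ≤ 2 * ∑ j, |βstar j| := by linarith
  -- RSC
  have hβh : βstar + h = βhat := by funext j; simp [hh]
  have hrsc' := hrsc h hcone hl1h
  rw [hβh] at hrsc'
  -- convexity bound
  have hconvb : L βhat - L βstar ≤ ∑ j, S βhat j * h j := by
    have hk2 := key βhat βstar
    have e : ∑ j, S βhat j * (βstar j - βhat j) = -∑ j, S βhat j * h j := by
      rw [← Finset.sum_neg_distrib]
      apply Finset.sum_congr rfl; intro j _; rw [hh]; ring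
    rw [e] at hk2; linarith
  -- basic inequality
  have hbasic : τ * ∑ j, (h j) ^ 2 ≤ 2 * lam * ∑ j, |h j| := by
    have e1 : τ * ∑ j, (h j) ^ 2 ≤ ∑ j, (S βhat j - S βstar j) * h j := by
      have e : ∑ j, (S βhat j - S βstar j) * h j
          = ∑ j, S βhat j * h j - ∑ j, S βstar j * h j := by
        rw [← Finset.sum_sub_distrib]; apply Finset.sum_congr rfl; intros; ring
      rw [e]; linarith
    have e2 : ∑ j, (S βhat j - S βstar j) * h j ≤ ∑ j, 2 * lam * |h j| := by
      apply Finset.sum_le_sum; intro j _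
      calc (S βhat j - S βstar j) * h j ≤ |(S βhat j - S βstar j) * h j| :=
            le_abs_self _
        _ = |S βhat j - S βstar j| * |h j| := abs_mul _ _
        _ ≤ (2 * lam) * |h j| := by
            apply mul_le_mul_of_nonneg_right _ (abs_nonneg _)
            calc |S βhat j - S βstar j| ≤ |S βhat j| + |S βstar j| := abs_sub _ _
              _ ≤ 2 * lam := by linarith [hhatfeas j, hfeas j]
    rw [← Finset.mul_sum] at e2
    linarith
  -- Cauchy–Schwarz on s
  set A := Real.sqrt (∑ j, (h j) ^ 2) with hA
  have hA0 : 0 ≤ A := Real.sqrt_nonneg _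
  have hAsq : A ^ 2 = ∑ j, (h j) ^ 2 :=
    Real.sq_sqrt (Finset.sum_nonneg fun j _ => sq_nonneg _)
  have hcs : ∑ j ∈ s, |h j| ≤ Real.sqrt k * A := by
    have h1 : (∑ j ∈ s, |h j|) ^ 2 ≤ (s.card : ℝ) * ∑ j ∈ s, (h j) ^ 2 := by
      have := Finset.sum_mul_sq_le_sq_mul_sq s (fun _ => (1:ℝ)) (fun j => |h j|)
      simpa [sq_abs] using this
    have h2 : (∑ j ∈ s, (h j) ^ 2) ≤ ∑ j, (h j) ^ 2 :=
      Finset.sum_le_sum_of_subset_of_nonneg (Finset.subset_univ s)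
        (fun j _ _ => sq_nonneg _)
    have h3 : (∑ j ∈ s, |h j|) ^ 2 ≤ (k : ℝ) * ∑ j, (h j) ^ 2 := by
      calc (∑ j ∈ s, |h j|) ^ 2 ≤ (s.card : ℝ) * ∑ j ∈ s, (h j) ^ 2 := h1
        _ ≤ (k : ℝ) * ∑ j, (h j) ^ 2 :=
            mul_le_mul (by exact_mod_cast hsupp) h2
              (Finset.sum_nonneg fun j _ => sq_nonneg _) (Nat.cast_nonneg k)
    have h4 : (0:ℝ) ≤ ∑ j ∈ s, |h j| := Finset.sum_nonneg fun j _ => abs_nonneg _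
    have h5 := Real.sqrt_le_sqrt h3
    rw [Real.sqrt_sq h4, Real.sqrt_mul (Nat.cast_nonneg k)] at h5
    exact h5
  -- ℓ1 in terms of A
  have hN1 : ∑ j, |h j| ≤ 2 * Real.sqrt k * A := by
    have e4 : ∑ j ∈ s, |h j| + ∑ j ∈ sᶜ, |h j| = ∑ j, |h j| :=
      Finset.sum_add_sum_compl s _
    linarith
  have hsqk : Real.sqrt k * Real.sqrt k = (k : ℝ) :=
    Real.mul_self_sqrt (Nat.cast_nonneg k)
  have hsqk0 : 0 ≤ Real.sqrt k := Real.sqrt_nonneg _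
  -- key quadratic inequality
  have hquad : τ * A ^ 2 ≤ 4 * Real.sqrt k * lam * A := by
    rw [hAsq]
    calc τ * ∑ j, (h j) ^ 2 ≤ 2 * lam * ∑ j, |h j| := hbasic
      _ ≤ 2 * lam * (2 * Real.sqrt k * A) := by
          apply mul_le_mul_of_nonneg_left hN1 (by linarith)
      _ = 4 * Real.sqrt k * lam * A := by ring
  have hAbound : A ≤ 4 * Real.sqrt k * lam / τ := by
    rcases eq_or_lt_of_le hA0 with hA0' | hApos
    · rw [← hA0']; positivity
    · rw [le_div_iff₀ hτ]
      nlinarith [hquad]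
  constructor
  · calc Real.sqrt (∑ j, (βhat j - βstar j) ^ 2) = A := rfl
      _ ≤ 4 * Real.sqrt k * lam / τ := hAbound
      _ = (4 * Real.sqrt k / τ) * lam := by ring
  · calc ∑ j, |βhat j - βstar j| = ∑ j, |h j| := rfl
      _ ≤ 2 * Real.sqrt k * A := hN1
      _ ≤ 2 * Real.sqrt k * (4 * Real.sqrt k * lam / τ) :=
          mul_le_mul_of_nonneg_left hAbound (by positivity)
      _ = (8 * k / τ) * lam := by
          field_simp
          nlinarith [hsqk]
end

section
/- (Deterministic form of Theorem 2.1.) Let (w_i, y_i), i = 1,…,n, be noisy data with w_i ∈ ℝ^p and y_i ∈ Y, and let f : ℝ × Y → ℝ be differentiable in its first argument with derivative ∂f and satisfy the convexity inequality f(t₂, y) − f(t₁, y) ≥ ∂f(t₁, y)(t₂ − t₁) for all t₁, t₂ ∈ ℝ and y ∈ Y. Let L_w(β) = (1/n)Σ_{i=1}^n f(⟨w_i, β⟩, y_i) and S_w(β) = (1/n)Σ_{i=1}^n ∂f(⟨w_i, β⟩, y_i) w_i. Let β* ∈ ℝ^p with support s = {j : β*_j ≠ 0} of cardinality at most k, let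 λ ≥ 0 and γ ≥ 0, and assume: (i) ‖S_w(β*)‖_∞ ≤ λ + γ‖β*‖₁; (ii) (restricted strong convexity) there exists τ_w > 0 such that L_w(β* + h) − L_w(β*) − ⟨S_w(β*), h⟩ ≥ τ_w‖h‖₂² for every h ∈ ℝ^p with ‖h_{s^c}‖₁ ≤ ‖h_s‖₁ and ‖h‖₁ ≤ 2‖β*‖₁; (iii) β̂ satisfies ‖S_w(β̂)‖_∞ ≤ λ + γ‖β̂‖₁ and ‖β̂‖₁ ≤ ‖β‖₁ for every β with ‖S_w(β)‖_∞ ≤ λ + γ‖β‖₁. Then ‖β̂ − β*‖₂ ≤ (4√k/τ_w)(λ + γ‖β*‖₁) and ‖β̂ − β*‖₁ ≤ 2√k ‖β̂ − β*‖₂. -/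
/-- Deterministic form of Theorem 2.1: error bounds for the MULL estimator with
measurement errors.  Here `L_w` is the empirical loss on the noisy data, `S_w` its
gradient, `β*` is `k`-sparse with support `s`, `β*` lies in the enlarged feasible set
(`‖S_w(β*)‖_∞ ≤ λ + γ‖β*‖₁`), restricted strong convexity holds with curvature
`τ_w > 0`, and `β̂` is a feasible point of minimal ℓ1 norm.  Then
`‖β̂ − β*‖₂ ≤ (4√k/τ_w)(λ + γ‖β*‖₁)` and `‖β̂ − β*‖₁ ≤ 2√k ‖β̂ − β*‖₂`. -/
theorem mull_error_bounds_noisy {Y : Type*} (n p k : ℕ)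
    (hn : 0 < n) (hp : 0 < p) (hk : 0 < k)
    (w : Fin n → Fin p → ℝ) (y : Fin n → Y) (f df : ℝ → Y → ℝ)
    (hderiv : ∀ (z : Y) (t : ℝ), HasDerivAt (fun u => f u z) (df t z) t)
    (hconv : ∀ (z : Y) (t₁ t₂ : ℝ), f t₂ z - f t₁ z ≥ df t₁ z * (t₂ - t₁))
    (Lw : (Fin p → ℝ) → ℝ) (Sw : (Fin p → ℝ) → Fin p → ℝ)
    (hL : ∀ β, Lw β = (1 / n) * ∑ i, f (∑ j, w i j * β j) (y i))
    (hS : ∀ β j, Sw β j = (1 / n) * ∑ i, df (∑ j', w i j' * β j') (y i) * w i j)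
    (βstar βhat : Fin p → ℝ) (lam γ τw : ℝ)
    (hlam : 0 ≤ lam) (hγ : 0 ≤ γ) (hτw : 0 < τw)
    (hsupp : (Finset.univ.filter (fun j => βstar j ≠ 0)).card ≤ k)
    (hfeas : ∀ j, |Sw βstar j| ≤ lam + γ * ∑ j', |βstar j'|)
    (hrsc : ∀ h : Fin p → ℝ,
      (∑ j ∈ (Finset.univ.filter (fun j => βstar j ≠ 0))ᶜ, |h j| ≤
        ∑ j ∈ Finset.univ.filter (fun j => βstar j ≠ 0), |h j|) →
      (∑ j, |h j|) ≤ 2 * ∑ j, |βstar j| →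
      Lw (βstar + h) - Lw βstar - (∑ j, Sw βstar j * h j) ≥ τw * ∑ j, (h j) ^ 2)
    (hhatfeas : ∀ j, |Sw βhat j| ≤ lam + γ * ∑ j', |βhat j'|)
    (hhatmin : ∀ β : Fin p → ℝ,
      (∀ j, |Sw β j| ≤ lam + γ * ∑ j', |β j'|) → ∑ j, |βhat j| ≤ ∑ j, |β j|) :
    Real.sqrt (∑ j, (βhat j - βstar j) ^ 2) ≤
        (4 * Real.sqrt k / τw) * (lam + γ * ∑ j, |βstar j|) ∧
      ∑ j, |βhat j - βstar j| ≤
        2 * Real.sqrt k * Real.sqrt (∑ j, (βhat j - βstar j) ^ 2) := by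
  classical
  set s := Finset.univ.filter (fun j => βstar j ≠ 0) with hs
  set h : Fin p → ℝ := fun j => βhat j - βstar j with hh
  have hzero : ∀ j ∈ sᶜ, βstar j = 0 := by
    intro j hj
    simp [hs, Finset.mem_compl, Finset.mem_filter] at hj
    exact hj
  -- β* ℓ1 norm concentrated on s
  have hstar_s : ∑ j ∈ s, |βstar j| = ∑ j, |βstar j| := by
    rw [← Finset.sum_add_sum_compl s (fun j => |βstar j|)]
    have : ∑ j ∈ sᶜ, |βstar j| = 0 := Finset.sum_eq_zero (by intro j hj; simp [hzero j hj])
    simp [this]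
  -- minimality at β*
  have hmin : ∑ j, |βhat j| ≤ ∑ j, |βstar j| := hhatmin βstar hfeas
  -- cone condition
  have hcone : ∑ j ∈ sᶜ, |h j| ≤ ∑ j ∈ s, |h j| := by
    have hsplit : ∑ j, |βhat j| = ∑ j ∈ s, |βhat j| + ∑ j ∈ sᶜ, |h j| := by
      rw [← Finset.sum_add_sum_compl s (fun j => |βhat j|)]
      congr 1
      refine Finset.sum_congr rfl fun j hj => ?_
      simp [hh, hzero j hj]
    have htri : ∑ j ∈ s, |βstar j| - ∑ j ∈ s, |h j| ≤ ∑ j ∈ s, |βhat j| := by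
      rw [← Finset.sum_sub_distrib]
      refine Finset.sum_le_sum fun j _ => ?_
      have := abs_sub_abs_le_abs_sub (βstar j) (βstar j - βhat j)
      have h1 : |βstar j - (βstar j - βhat j)| = |βhat j| := by ring_nf
      have h2 : |βstar j - βhat j| = |h j| := by rw [hh]; rw [abs_sub_comm]
      linarith [abs_sub_abs_le_abs_sub (βstar j) (βstar j - βhat j), h1 ▸ h2 ▸ this]
    rw [hsplit] at hmin
    rw [hstar_s] at htri
    linarith
  -- ℓ1 bound of h by 2‖β*‖₁
  have hl1small : ∑ j, |h j| ≤ 2 * ∑ j, |βstar j| := by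
    have : ∑ j, |h j| ≤ ∑ j, |βhat j| + ∑ j, |βstar j| := by
      rw [← Finset.sum_add_distrib]
      exact Finset.sum_le_sum fun j _ => (abs_sub (βhat j) (βstar j))
    linarith
  -- Cauchy-Schwarz: ∑_s |h| ≤ √k √(∑ h²)
  have hsum_sq_nonneg : (0:ℝ) ≤ ∑ j, (h j)^2 := Finset.sum_nonneg fun j _ => sq_nonneg _
  have hN : Real.sqrt (∑ j, (h j)^2) ^ 2 = ∑ j, (h j)^2 := Real.sq_sqrt hsum_sq_nonneg
  have hcs : ∑ j ∈ s, |h j| ≤ Real.sqrt k * Real.sqrt (∑ j, (h j)^2) := by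
    have h1 : (∑ j ∈ s, |h j|) ^ 2 ≤ (s.card : ℝ) * ∑ j ∈ s, |h j| ^ 2 := by
      exact_mod_cast sq_sum_le_card_mul_sum_sq (s := s) (f := fun j => |h j|)
    have h2 : ∑ j ∈ s, |h j| ^ 2 ≤ ∑ j, (h j)^2 := by
      have : ∑ j ∈ s, |h j| ^ 2 = ∑ j ∈ s, (h j)^2 := by
        refine Finset.sum_congr rfl fun j _ => sq_abs _
      rw [this]
      exact Finset.sum_le_sum_of_subset_of_nonneg (Finset.subset_univ s)
        (fun j _ _ => sq_nonneg _)
    have hcard : (s.card : ℝ) ≤ (k : ℝ) := by exact_mod_cast hsupp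
    have h3 : (∑ j ∈ s, |h j|) ^ 2 ≤ (k : ℝ) * ∑ j, (h j)^2 := by
      calc (∑ j ∈ s, |h j|) ^ 2 ≤ (s.card : ℝ) * ∑ j ∈ s, |h j| ^ 2 := h1
        _ ≤ (k : ℝ) * ∑ j, (h j)^2 := by
            apply mul_le_mul hcard h2 (Finset.sum_nonneg fun j _ => sq_nonneg _)
              (Nat.cast_nonneg k)
    have h4 : Real.sqrt ((∑ j ∈ s, |h j|) ^ 2) ≤ Real.sqrt ((k:ℝ) * ∑ j, (h j)^2) :=
      Real.sqrt_le_sqrt h3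
    rwa [Real.sqrt_sq (Finset.sum_nonneg fun j _ => abs_nonneg _),
      Real.sqrt_mul (Nat.cast_nonneg k)] at h4
  -- second claim
  have hl1_l2 : ∑ j, |h j| ≤ 2 * Real.sqrt k * Real.sqrt (∑ j, (h j)^2) := by
    have : ∑ j, |h j| = ∑ j ∈ s, |h j| + ∑ j ∈ sᶜ, |h j| :=
      (Finset.sum_add_sum_compl s _).symm
    nlinarith [hcone, hcs]
  -- convexity of Lw
  have hLconv : ∀ β₁ β₂ : Fin p → ℝ,
      Lw β₂ - Lw β₁ ≥ ∑ j, Sw β₁ j * (β₂ j - β₁ j) := by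
    intro β₁ β₂
    have hswap : ∑ j, Sw β₁ j * (β₂ j - β₁ j)
        = (1/n) * ∑ i, df (∑ j', w i j' * β₁ j') (y i) *
            ((∑ j, w i j * β₂ j) - ∑ j, w i j * β₁ j) := by
      calc ∑ j, Sw β₁ j * (β₂ j - β₁ j)
          = ∑ j, ∑ i, (1/(n:ℝ)) *
              (df (∑ j', w i j' * β₁ j') (y i) * w i j * (β₂ j - β₁ j)) := by
            refine Finset.sum_congr rfl fun j _ => ?_
            rw [hS, Finset.mul_sum, Finset.sum_mul]
            exact Finset.sum_congr rfl fun i _ => by ring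
        _ = ∑ i, ∑ j, (1/(n:ℝ)) *
              (df (∑ j', w i j' * β₁ j') (y i) * w i j * (β₂ j - β₁ j)) :=
            Finset.sum_comm
        _ = (1/n) * ∑ i, df (∑ j', w i j' * β₁ j') (y i) *
              ((∑ j, w i j * β₂ j) - ∑ j, w i j * β₁ j) := by
            rw [Finset.mul_sum]
            refine Finset.sum_congr rfl fun i _ => ?_
            rw [← Finset.sum_sub_distrib, Finset.mul_sum, Finset.mul_sum]
            exact Finset.sum_congr rfl fun j _ => by ring
    rw [hswap, hL, hL, ← mul_sub, ← Finset.sum_sub_distrib]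
    have hn' : (0:ℝ) < (1/n : ℝ) := by positivity
    apply mul_le_mul_of_nonneg_left _ (le_of_lt hn')
    exact Finset.sum_le_sum fun i _ => hconv (y i) _ _
  -- apply RSC
  have hrsc' : τw * ∑ j, (h j)^2 ≤ Lw βhat - Lw βstar - ∑ j, Sw βstar j * h j := by
    have := hrsc h hcone hl1small
    have hβ : βstar + h = βhat := by funext j; simp [hh]
    rw [hβ] at this
    linarith
  -- gradient difference bound
  have C := lam + γ * ∑ j, |βstar j|
  have hCnn : 0 ≤ lam + γ * ∑ j, |βstar j| := by
    have : 0 ≤ ∑ j, |βstar j| := Finset.sum_nonneg fun j _ => abs_nonneg _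
    positivity
  have hhatC : ∀ j, |Sw βhat j| ≤ lam + γ * ∑ j', |βstar j'| := by
    intro j
    calc |Sw βhat j| ≤ lam + γ * ∑ j', |βhat j'| := hhatfeas j
      _ ≤ lam + γ * ∑ j', |βstar j'| := by nlinarith
  have hmain : τw * ∑ j, (h j)^2 ≤
      2 * (lam + γ * ∑ j, |βstar j|) * ∑ j, |h j| := by
    have h1 : Lw βhat - Lw βstar ≤ ∑ j, Sw βhat j * h j := by
      have := hLconv βhat βstar
      have e : ∑ j, Sw βhat j * (βstar j - βhat j) = - ∑ j, Sw βhat j * h j := by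
        rw [← Finset.sum_neg_distrib]
        refine Finset.sum_congr rfl fun j _ => by simp [hh]; ring
      rw [e] at this
      linarith
    have h2 : ∑ j, Sw βhat j * h j - ∑ j, Sw βstar j * h j ≤
        2 * (lam + γ * ∑ j, |βstar j|) * ∑ j, |h j| := by
      rw [← Finset.sum_sub_distrib, Finset.mul_sum]
      refine Finset.sum_le_sum fun j _ => ?_
      have : Sw βhat j * h j - Sw βstar j * h j = (Sw βhat j - Sw βstar j) * h j := by ring
      rw [this]
      calc (Sw βhat j - Sw βstar j) * h j ≤ |(Sw βhat j - Sw βstar j) * h j| := le_abs_self _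
        _ = |Sw βhat j - Sw βstar j| * |h j| := abs_mul _ _
        _ ≤ (|Sw βhat j| + |Sw βstar j|) * |h j| :=
            mul_le_mul_of_nonneg_right (abs_sub _ _) (abs_nonneg _)
        _ ≤ 2 * (lam + γ * ∑ j, |βstar j|) * |h j| := by
            have := hhatC j; have := hfeas j
            nlinarith [abs_nonneg (h j)]
    linarith [hrsc']
  -- finish first claim
  have hfinal : Real.sqrt (∑ j, (h j)^2) ≤
      (4 * Real.sqrt k / τw) * (lam + γ * ∑ j, |βstar j|) := by
    set N := Real.sqrt (∑ j, (h j)^2) with hNdef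
    have hNnn : 0 ≤ N := Real.sqrt_nonneg _
    have hchain : τw * N^2 ≤ 4 * Real.sqrt k * (lam + γ * ∑ j, |βstar j|) * N := by
      rw [hN]
      calc τw * ∑ j, (h j)^2 ≤ 2 * (lam + γ * ∑ j, |βstar j|) * ∑ j, |h j| := hmain
        _ ≤ 2 * (lam + γ * ∑ j, |βstar j|) * (2 * Real.sqrt k * N) := by
            apply mul_le_mul_of_nonneg_left hl1_l2 (by positivity)
        _ = 4 * Real.sqrt k * (lam + γ * ∑ j, |βstar j|) * N := by ring
    rcases eq_or_lt_of_le hNnn with hN0 | hNpos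
    · rw [← hN0]
      have : 0 ≤ Real.sqrt k := Real.sqrt_nonneg _
      positivity
    · have : τw * N ≤ 4 * Real.sqrt k * (lam + γ * ∑ j, |βstar j|) := by
        have := mul_le_mul_of_nonneg_right hchain (le_of_lt (inv_pos.mpr hNpos))
        rw [pow_two] at this
        field_simp at this ⊢
        nlinarith
      rw [div_mul_eq_mul_div, le_div_iff₀ hτw]
      linarith
  exact ⟨hfinal, hl1_l2⟩
end

section
/- (Deterministic core of Lemma 1.3: restricted strong convexity from a restricted-eigenvalue design condition.) Let (x_i, y_i), i = 1,…,n, be data with x_i ∈ ℝ^p and y_i ∈ Y, and let f : ℝ × Y → ℝ be twice differentiable in its first argument with first derivative ∂f and second derivative ∂²f. Let L(β) = (1/n)Σ_{i=1}^n f(⟨x_i, β⟩, y_i) and S(β) = (1/n)Σ_{i=1}^n ∂f(⟨x_i, β⟩, y_i) x_i. Let β* ∈ ℝ^p with support s = {j : β*_j ≠ 0} of cardinality at most k (k ≥ 1), and let M₁, κ₁, κ₂ > 0. Assume: (i) ∂²f(⟨x_i, β* + h'⟩, y_i) ≥ M₁ for every i and every h' ∈ ℝ^p with ‖h'‖₁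 ≤ 2‖β*‖₁; (ii) for every v ∈ ℝ^p, √((1/n)Σ_{i=1}^n ⟨x_i, v⟩²) ≥ κ₁‖v‖₂ − κ₂√(log p / n)‖v‖₁; (iii) n > 4(κ₂/κ₁)² k log p. Then for every h ∈ ℝ^p with ‖h_{s^c}‖₁ ≤ ‖h_s‖₁ and ‖h‖₁ ≤ 2‖β*‖₁, L(β* + h) − L(β*) − ⟨S(β*), h⟩ ≥ τ‖h‖₂², where τ = (M₁/2)(κ₁ − 2κ₂√(k log p / n))² > 0. -/
/-!
Along the segment from `⟨xᵢ, β*⟩` to `⟨xᵢ, β* + h⟩` the curvature of `f` is at least `M₁`, so each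
summand of the Bregman divergence `L(β* + h) − L(β*) − ⟨S(β*), h⟩` is at least `M₁ ⟨xᵢ, h⟩² / 2`.
On the cone `‖h_{sᶜ}‖₁ ≤ ‖h_s‖₁` Cauchy–Schwarz gives `‖h‖₁ ≤ 2√k ‖h‖₂`, which turns the
restricted-eigenvalue condition into `(1/n) Σᵢ ⟨xᵢ, h⟩² ≥ (κ₁ − 2κ₂√(k log p / n))² ‖h‖₂²`; the
sample-size condition makes this constant positive.
-/

open Finset Real

theorem add_deriv_add_half_le_of_le_deriv2 {φ dφ d2φ : ℝ → ℝ} {c : ℝ}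
    (h1 : ∀ t, HasDerivAt φ (dφ t) t) (h2 : ∀ t, HasDerivAt dφ (d2φ t) t)
    (hc : ∀ t ∈ Set.Icc (0 : ℝ) 1, c ≤ d2φ t) :
    φ 0 + dφ 0 + c / 2 ≤ φ 1 := by
  -- `g := φ - c t² / 2` has a monotone derivative on `[0, 1]`, so its slope there is at least `g' 0`.
  let g : ℝ → ℝ := fun t => φ t - c * t ^ 2 / 2
  let g' : ℝ → ℝ := fun t => dφ t - c * t
  have hg : ∀ t, HasDerivAt g (g' t) t := fun t =>
    ((h1 t).sub (((hasDerivAt_pow 2 t).const_mul c).div_const 2)).congr_deriv (by ring)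
  have hg' : ∀ t, HasDerivAt g' (d2φ t - c) t := fun t =>
    ((h2 t).sub ((hasDerivAt_id t).const_mul c)).congr_deriv (by simp)
  have hmono : MonotoneOn g' (Set.Icc 0 1) :=
    monotoneOn_of_hasDerivWithinAt_nonneg (convex_Icc 0 1)
      (fun t _ => (hg' t).continuousAt.continuousWithinAt)
      (fun t _ => (hg' t).hasDerivWithinAt)
      (fun t ht => sub_nonneg.2 (hc t (interior_subset ht)))
  obtain ⟨ξ, hξ, hslope⟩ := exists_hasDerivAt_eq_slope g g' zero_lt_one
    (fun t _ => (hg t).continuousAt.continuousWithinAt) (fun t _ => hg t)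
  have := hmono (Set.left_mem_Icc.2 zero_le_one) (Set.Ioo_subset_Icc_self hξ) hξ.1.le
  simp only [g, g', hslope] at this
  linarith

theorem add_deriv_mul_add_half_sq_le {g dg d2g : ℝ → ℝ} {M a b : ℝ}
    (h1 : ∀ u, HasDerivAt g (dg u) u) (h2 : ∀ u, HasDerivAt dg (d2g u) u)
    (hM : ∀ t ∈ Set.Icc (0 : ℝ) 1, M ≤ d2g (a + t * b)) :
    g a + dg a * b + M * b ^ 2 / 2 ≤ g (a + b) := by
  have hline : ∀ t, HasDerivAt (fun t => a + t * b) b t := fun t => by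
    simpa using ((hasDerivAt_id t).mul_const b).const_add a
  have := add_deriv_add_half_le_of_le_deriv2 (φ := fun t => g (a + t * b))
    (fun t => (h1 _).comp t (hline t)) (fun t => ((h2 _).comp t (hline t)).mul_const b)
    (fun t ht => by simpa [sq, mul_assoc] using mul_le_mul_of_nonneg_right (hM t ht) (sq_nonneg b))
  simpa [sq] using this

theorem sum_abs_le_sqrt_card_mul_sqrt_sum_sq {κ : Type*} [Fintype κ] (s : Finset κ) (v : κ → ℝ) :
    ∑ j ∈ s, |v j| ≤ √(#s) * √(∑ j, v j ^ 2) := by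
  rw [← sqrt_mul (Nat.cast_nonneg _)]
  refine (le_abs_self _).trans (abs_le_sqrt ?_)
  calc (∑ j ∈ s, |v j|) ^ 2 ≤ #s * ∑ j ∈ s, |v j| ^ 2 := sq_sum_le_card_mul_sum_sq
    _ ≤ #s * ∑ j, v j ^ 2 := by
      simp only [sq_abs]
      gcongr
      exact subset_univ s

theorem sum_abs_le_two_sqrt_mul_sqrt_sum_sq_of_cone {κ : Type*} [Fintype κ] [DecidableEq κ]
    {s : Finset κ} {k : ℕ} (hs : #s ≤ k) {v : κ → ℝ}
    (hcone : ∑ j ∈ sᶜ, |v j| ≤ ∑ j ∈ s, |v j|) :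
    ∑ j, |v j| ≤ 2 * √k * √(∑ j, v j ^ 2) := by
  have hsk : √(#s) ≤ √k := sqrt_le_sqrt (by exact_mod_cast hs)
  calc ∑ j, |v j| = ∑ j ∈ s, |v j| + ∑ j ∈ sᶜ, |v j| := (sum_add_sum_compl s (|v ·|)).symm
    _ ≤ 2 * (√(#s) * √(∑ j, v j ^ 2)) := by
      linarith [sum_abs_le_sqrt_card_mul_sqrt_sum_sq s v]
    _ ≤ 2 * √k * √(∑ j, v j ^ 2) := by
      rw [← mul_assoc]; gcongr

theorem sq_mul_sum_sq_le_of_cone {κ : Type*} [Fintype κ] [DecidableEq κ]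
    {s : Finset κ} {k : ℕ} (hs : #s ≤ k) {v : κ → ℝ}
    (hcone : ∑ j ∈ sᶜ, |v j| ≤ ∑ j ∈ s, |v j|) {Q κ₁ r : ℝ} (hQ : 0 ≤ Q) (hr : 0 ≤ r)
    (hc : 0 ≤ κ₁ - 2 * r * √k) (hRE : κ₁ * √(∑ j, v j ^ 2) - r * ∑ j, |v j| ≤ √Q) :
    (κ₁ - 2 * r * √k) ^ 2 * ∑ j, v j ^ 2 ≤ Q := by
  have hl1 := sum_abs_le_two_sqrt_mul_sqrt_sum_sq_of_cone hs hcone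
  have hle : (κ₁ - 2 * r * √k) * √(∑ j, v j ^ 2) ≤ √Q := by
    nlinarith [mul_le_mul_of_nonneg_left hl1 hr]
  calc (κ₁ - 2 * r * √k) ^ 2 * ∑ j, v j ^ 2 = ((κ₁ - 2 * r * √k) * √(∑ j, v j ^ 2)) ^ 2 := by
        rw [mul_pow, sq_sqrt (by positivity)]
    _ ≤ √Q ^ 2 := by gcongr
    _ = Q := sq_sqrt hQ

theorem two_mul_mul_sqrt_div_lt {n A κ₁ κ₂ : ℝ} (hn : 0 < n) (hκ₁ : 0 < κ₁) (hκ₂ : 0 < κ₂)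
    (hsample : 4 * (κ₂ / κ₁) ^ 2 * A < n) :
    2 * κ₂ * √(A / n) < κ₁ := by
  have : √(A / n) < κ₁ / (2 * κ₂) := by
    rw [sqrt_lt' (by positivity), div_lt_iff₀ hn]
    calc A = 4 * (κ₂ / κ₁) ^ 2 * A * (κ₁ / (2 * κ₂)) ^ 2 := by field_simp; ring
      _ < n * (κ₁ / (2 * κ₂)) ^ 2 := by gcongr
      _ = (κ₁ / (2 * κ₂)) ^ 2 * n := mul_comm _ _
  rwa [lt_div_iff₀ (by positivity), mul_comm] at this

theorem average_loss_sub_sub_gradient_eq {ι κ Y : Type*} [Fintype ι] [Fintype κ] (w : ℝ)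
    (x : ι → κ → ℝ) (y : ι → Y) (f df : ℝ → Y → ℝ) (β h : κ → ℝ) :
    w * ∑ i, f (x i ⬝ᵥ (β + h)) (y i) - w * ∑ i, f (x i ⬝ᵥ β) (y i) -
        ∑ j, (w * ∑ i, df (x i ⬝ᵥ β) (y i) * x i j) * h j =
      w * ∑ i, (f (x i ⬝ᵥ β + x i ⬝ᵥ h) (y i) - f (x i ⬝ᵥ β) (y i) -
        df (x i ⬝ᵥ β) (y i) * (x i ⬝ᵥ h)) := by
  have hgrad : ∑ j, (w * ∑ i, df (x i ⬝ᵥ β) (y i) * x i j) * h j =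
      w * ∑ i, df (x i ⬝ᵥ β) (y i) * (x i ⬝ᵥ h) := by
    simp only [dotProduct, mul_sum, sum_mul]
    rw [sum_comm]
    exact sum_congr rfl fun i _ => sum_congr rfl fun j _ => by ring
  simp only [hgrad, dotProduct_add, sum_sub_distrib, mul_sub]

theorem half_mul_sq_le_bregman_of_le_deriv2 {κ Y : Type*} [Fintype κ] {f df d2f : ℝ → Y → ℝ}
    {z : Y} (hderiv1 : ∀ t, HasDerivAt (fun u => f u z) (df t z) t)
    (hderiv2 : ∀ t, HasDerivAt (fun u => df u z) (d2f t z) t) {u β h : κ → ℝ} {M R : ℝ}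
    (hlb : ∀ h' : κ → ℝ, ∑ j, |h' j| ≤ R → M ≤ d2f (u ⬝ᵥ (β + h')) z)
    (hball : ∑ j, |h j| ≤ R) :
    M * (u ⬝ᵥ h) ^ 2 / 2 ≤ f (u ⬝ᵥ β + u ⬝ᵥ h) z - f (u ⬝ᵥ β) z - df (u ⬝ᵥ β) z * (u ⬝ᵥ h) := by
  have := add_deriv_mul_add_half_sq_le (M := M) (a := u ⬝ᵥ β) (b := u ⬝ᵥ h)
    hderiv1 hderiv2 fun t ht => by
    have hth : ∑ j, |(t • h) j| ≤ ∑ j, |h j| := by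
      simp only [Pi.smul_apply, smul_eq_mul, abs_mul, ← mul_sum, abs_of_nonneg ht.1]
      exact mul_le_of_le_one_left (by positivity) ht.2
    rw [← smul_eq_mul, ← dotProduct_smul, ← dotProduct_add]
    exact hlb (t • h) (hth.trans hball)
  linarith

theorem rsc_from_restricted_eigenvalue_general {Y : Type*} (n p k : ℕ)
    (hn : 0 < n)
    (x : Fin n → Fin p → ℝ) (y : Fin n → Y) (f df d2f : ℝ → Y → ℝ)
    (hderiv1 : ∀ (z : Y) (t : ℝ), HasDerivAt (fun u => f u z) (df t z) t)
    (hderiv2 : ∀ (z : Y) (t : ℝ), HasDerivAt (fun u => df u z) (d2f t z) t)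
    (L : (Fin p → ℝ) → ℝ) (S : (Fin p → ℝ) → Fin p → ℝ)
    (hL : ∀ β, L β = (1 / n) * ∑ i, f (∑ j, x i j * β j) (y i))
    (hS : ∀ β j, S β j = (1 / n) * ∑ i, df (∑ j', x i j' * β j') (y i) * x i j)
    (βstar : Fin p → ℝ) (M₁ κ₁ κ₂ : ℝ)
    (hM₁ : 0 < M₁) (hκ₁ : 0 < κ₁) (hκ₂ : 0 < κ₂)
    (hsupp : (Finset.univ.filter (fun j => βstar j ≠ 0)).card ≤ k)
    (hlb : ∀ (i : Fin n) (h' : Fin p → ℝ), (∑ j, |h' j|) ≤ 2 * ∑ j, |βstar j| →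
      d2f (∑ j, x i j * (βstar j + h' j)) (y i) ≥ M₁)
    (hRE : ∀ v : Fin p → ℝ,
      Real.sqrt ((1 / n) * ∑ i, (∑ j, x i j * v j) ^ 2) ≥
        κ₁ * Real.sqrt (∑ j, (v j) ^ 2) -
          κ₂ * Real.sqrt (Real.log p / n) * ∑ j, |v j|)
    (hsample : (n : ℝ) > 4 * (κ₂ / κ₁) ^ 2 * k * Real.log p) :
    0 < (M₁ / 2) * (κ₁ - 2 * κ₂ * Real.sqrt (k * Real.log p / n)) ^ 2 ∧
      ∀ h : Fin p → ℝ,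
        (∑ j ∈ (Finset.univ.filter (fun j => βstar j ≠ 0))ᶜ, |h j| ≤
          ∑ j ∈ Finset.univ.filter (fun j => βstar j ≠ 0), |h j|) →
        (∑ j, |h j|) ≤ 2 * ∑ j, |βstar j| →
        L (βstar + h) - L βstar - (∑ j, S βstar j * h j) ≥
          (M₁ / 2) * (κ₁ - 2 * κ₂ * Real.sqrt (k * Real.log p / n)) ^ 2 *
            ∑ j, (h j) ^ 2 := by
  have hn' : (0 : ℝ) < n := by exact_mod_cast hn
  have hsqrt : 2 * κ₂ * √(k * log p / n) = 2 * (κ₂ * √(log p / n)) * √k := by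
    rw [mul_comm (k : ℝ), mul_div_right_comm, sqrt_mul' _ (Nat.cast_nonneg k)]; ring
  have hc : 0 < κ₁ - 2 * κ₂ * √(k * log p / n) :=
    sub_pos.2 (two_mul_mul_sqrt_div_lt hn' hκ₁ hκ₂ (by rw [← mul_assoc]; exact hsample))
  refine ⟨by positivity, fun h hcone hball => ?_⟩
  rw [hsqrt] at hc ⊢
  have hquad : _ ≤ 1 / n * ∑ i, (x i ⬝ᵥ h) ^ 2 :=
    sq_mul_sum_sq_le_of_cone hsupp hcone (by positivity) (mul_nonneg hκ₂.le (sqrt_nonneg _))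
      hc.le (hRE h).le
  calc L (βstar + h) - L βstar - ∑ j, S βstar j * h j
      = 1 / n * ∑ i, (f (x i ⬝ᵥ βstar + x i ⬝ᵥ h) (y i) - f (x i ⬝ᵥ βstar) (y i) -
          df (x i ⬝ᵥ βstar) (y i) * (x i ⬝ᵥ h)) := by
        simp only [hL, hS]; exact average_loss_sub_sub_gradient_eq _ x y f df βstar h
    _ ≥ 1 / n * ∑ i, M₁ * (x i ⬝ᵥ h) ^ 2 / 2 := by
        gcongr with i
        exact half_mul_sq_le_bregman_of_le_deriv2 (hderiv1 (y i)) (hderiv2 (y i)) (hlb i) hball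
    _ = M₁ / 2 * (1 / n * ∑ i, (x i ⬝ᵥ h) ^ 2) := by simp only [mul_sum]; ring_nf
    _ ≥ _ := by rw [ge_iff_le, mul_assoc (M₁ / 2)]; gcongr

/-- Deterministic core of Lemma 1.3: restricted strong convexity from a
restricted-eigenvalue design condition.  If the second derivative of the loss is
bounded below by `M₁` on the relevant ℓ1 ball, the design satisfies
`√((1/n)Σᵢ⟨xᵢ, v⟩²) ≥ κ₁‖v‖₂ − κ₂√(log p / n)‖v‖₁` for all `v`, and
`n > 4(κ₂/κ₁)² k log p`, then for every `h` in the cone `‖h_{sᶜ}‖₁ ≤ ‖h_s‖₁` with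
`‖h‖₁ ≤ 2‖β*‖₁`, `L(β* + h) − L(β*) − ⟨S(β*), h⟩ ≥ τ‖h‖₂²` with
`τ = (M₁/2)(κ₁ − 2κ₂√(k log p / n))² > 0`. -/
theorem rsc_from_restricted_eigenvalue {Y : Type*} (n p k : ℕ)
    (hn : 0 < n) (hp : 0 < p) (hk : 1 ≤ k)
    (x : Fin n → Fin p → ℝ) (y : Fin n → Y) (f df d2f : ℝ → Y → ℝ)
    (hderiv1 : ∀ (z : Y) (t : ℝ), HasDerivAt (fun u => f u z) (df t z) t)
    (hderiv2 : ∀ (z : Y) (t : ℝ), HasDerivAt (fun u => df u z) (d2f t z) t)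
    (L : (Fin p → ℝ) → ℝ) (S : (Fin p → ℝ) → Fin p → ℝ)
    (hL : ∀ β, L β = (1 / n) * ∑ i, f (∑ j, x i j * β j) (y i))
    (hS : ∀ β j, S β j = (1 / n) * ∑ i, df (∑ j', x i j' * β j') (y i) * x i j)
    (βstar : Fin p → ℝ) (M₁ κ₁ κ₂ : ℝ)
    (hM₁ : 0 < M₁) (hκ₁ : 0 < κ₁) (hκ₂ : 0 < κ₂)
    (hsupp : (Finset.univ.filter (fun j => βstar j ≠ 0)).card ≤ k)
    (hlb : ∀ (i : Fin n) (h' : Fin p → ℝ), (∑ j, |h' j|) ≤ 2 * ∑ j, |βstar j| →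
      d2f (∑ j, x i j * (βstar j + h' j)) (y i) ≥ M₁)
    (hRE : ∀ v : Fin p → ℝ,
      Real.sqrt ((1 / n) * ∑ i, (∑ j, x i j * v j) ^ 2) ≥
        κ₁ * Real.sqrt (∑ j, (v j) ^ 2) -
          κ₂ * Real.sqrt (Real.log p / n) * ∑ j, |v j|)
    (hlogp : 0 < Real.log p)
    (hsample : (n : ℝ) > 4 * (κ₂ / κ₁) ^ 2 * k * Real.log p) :
    0 < (M₁ / 2) * (κ₁ - 2 * κ₂ * Real.sqrt (k * Real.log p / n)) ^ 2 ∧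
      ∀ h : Fin p → ℝ,
        (∑ j ∈ (Finset.univ.filter (fun j => βstar j ≠ 0))ᶜ, |h j| ≤
          ∑ j ∈ Finset.univ.filter (fun j => βstar j ≠ 0), |h j|) →
        (∑ j, |h j|) ≤ 2 * ∑ j, |βstar j| →
        L (βstar + h) - L βstar - (∑ j, S βstar j * h j) ≥
          (M₁ / 2) * (κ₁ - 2 * κ₂ * Real.sqrt (k * Real.log p / n)) ^ 2 *
            ∑ j, (h j) ^ 2 :=
  rsc_from_restricted_eigenvalue_general n p k hn x y f df d2f hderiv1 hderiv2 L S hL hS βstar M₁ κ₁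
    κ₂ hM₁ hκ₁ hκ₂ hsupp hlb hRE hsample
end

section
/- (Deterministic core of the restricted strong convexity lemma for the Lasso analog.) Let (w_i, y_i), i = 1,…,n, be data with w_i ∈ ℝ^p and y_i ∈ Y, and let f : ℝ × Y → ℝ be twice differentiable in its first argument with first derivative ∂f and second derivative ∂²f. Let L_w(β) = (1/n)Σ_{i=1}^n f(⟨w_i, β⟩, y_i) and S_w(β) = (1/n)Σ_{i=1}^n ∂f(⟨w_i, β⟩, y_i) w_i. Let β* ∈ ℝ^p with support s = {j : β*_j ≠ 0} of cardinality at most k (k ≥ 1), and let M₃, κ₁, κ₂ > 0. Assume: (i) ∂²f(⟨w_i, β* + h'⟩, y_i) ≥ M₃ for every i and every h' ∈ ℝ^p with ‖h'‖₁ ≤ 3‖β*‖₁; (ii) for every v ∈ ℝ^p, √((1/n)Σ_{i=1}^n ⟨w_i, v⟩²) ≥ κ₁‖v‖₂ − κ₂√(log p / n)‖v‖₁; (iii) n > 16(κ₂/κ₁)² k log p. Then for every h ∈ ℝ^p with ‖h_{s^c}‖₁ ≤ 3‖h_s‖₁ and ‖h‖₁ ≤ 3‖β*‖₁, L_w(β*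 + h) − L_w(β*) − ⟨S_w(β*), h⟩ ≥ τ_L‖h‖₂², where τ_L = (M₃/2)(κ₁ − 4κ₂√(k log p / n))² > 0. -/
/-! Along the segment `t ↦ β* + t h` the `i`-th summand of `L_w` has second derivative
`∂²f(⟨wᵢ, β* + t h⟩, yᵢ) ⟨wᵢ, h⟩² ≥ M₃ ⟨wᵢ, h⟩²`, since `t h` stays in the ℓ1 ball of (i); a
second-order Taylor bound thus gives `L_w(β* + h) − L_w(β*) − ⟨S_w(β*), h⟩ ≥ (M₃/2) Q` with
`Q = (1/n) Σᵢ ⟨wᵢ, h⟩²`. On the cone, `‖h‖₁ ≤ 4‖h_s‖₁ ≤ 4√k ‖h‖₂` by Cauchy–Schwarz on the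
support, so (ii) yields `√Q ≥ (κ₁ − 4κ₂√(k log p / n)) ‖h‖₂`, and (iii) is exactly what makes
this constant positive. -/

open Set Finset Real

theorem taylor_lower_bound_of_le_deriv2 {g g' g'' : ℝ → ℝ} {a b K : ℝ} (hab : a < b)
    (hg : ∀ t ∈ Icc a b, HasDerivAt g (g' t) t) (hg' : ∀ t ∈ Icc a b, HasDerivAt g' (g'' t) t)
    (hK : ∀ t ∈ Icc a b, K ≤ g'' t) :
    g a + g' a * (b - a) + K / 2 * (b - a) ^ 2 ≤ g b := by
  -- `φ` is convex, so it lies above its tangent line at `a`.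
  set φ : ℝ → ℝ := fun t => g t - K / 2 * (t - a) ^ 2
  have hφ : ∀ t ∈ Icc a b, HasDerivAt φ (g' t - K * (t - a)) t := fun t ht => by
    refine ((hg t ht).fun_sub ((((hasDerivAt_id' t).sub_const a).fun_pow 2).const_mul
      (K / 2))).congr_deriv ?_
    ring
  have hφ' : ∀ t ∈ Icc a b, HasDerivAt (fun t => g' t - K * (t - a)) (g'' t - K) t :=
    fun t ht => by
      simpa using (hg' t ht).fun_sub (((hasDerivAt_id' t).sub_const a).const_mul K)
  have hconvex : ConvexOn ℝ (Icc a b) φ :=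
    convexOn_of_hasDerivWithinAt2_nonneg (convex_Icc a b)
      (fun t ht => (hφ t ht).continuousAt.continuousWithinAt)
      (fun t ht => (hφ t (interior_subset ht)).hasDerivWithinAt)
      (fun t ht => (hφ' t (interior_subset ht)).hasDerivWithinAt)
      (fun t ht => sub_nonneg.2 (hK t (interior_subset ht)))
  have hslope := hconvex.le_slope_of_hasDerivAt (left_mem_Icc.2 hab.le) (right_mem_Icc.2 hab.le)
    hab (hφ a (left_mem_Icc.2 hab.le))
  rw [slope_def_field, le_div_iff₀ (sub_pos.2 hab)] at hslope
  simp only [φ, sub_self] at hslope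
  linarith

theorem taylor_lower_bound_along_segment {φ φ' φ'' : ℝ → ℝ}
    (hφ : ∀ x, HasDerivAt φ (φ' x) x) (hφ' : ∀ x, HasDerivAt φ' (φ'' x) x) {a b M : ℝ}
    (hM : ∀ t ∈ Icc (0 : ℝ) 1, M ≤ φ'' (a + t * b)) :
    φ a + φ' a * b + M / 2 * b ^ 2 ≤ φ (a + b) := by
  have hline : ∀ t : ℝ, HasDerivAt (fun t => a + t * b) b t := fun t => by
    simpa using ((hasDerivAt_id t).mul_const b).const_add a
  have := taylor_lower_bound_of_le_deriv2 (g := fun t => φ (a + t * b))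
    (g' := fun t => φ' (a + t * b) * b) (g'' := fun t => φ'' (a + t * b) * b * b)
    (K := M * b ^ 2) zero_lt_one (fun t _ => (hφ _).comp t (hline t))
    (fun t _ => ((hφ' _).comp t (hline t)).mul_const b)
    (fun t ht => by nlinarith [hM t ht, sq_nonneg b])
  simp only [zero_mul, add_zero, one_mul, sub_zero, one_pow, mul_one] at this
  linarith

theorem sum_abs_le_of_mem_cone {ι : Type*} [Fintype ι] [DecidableEq ι] {s : Finset ι}
    {h : ι → ℝ} {C : ℝ} {k : ℕ} (hC : 0 ≤ C) (hs : #s ≤ k)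
    (hcone : ∑ j ∈ sᶜ, |h j| ≤ C * ∑ j ∈ s, |h j|) :
    ∑ j, |h j| ≤ (1 + C) * √k * √(∑ j, h j ^ 2) := by
  have hsupport : ∑ j ∈ s, |h j| ≤ √k * √(∑ j, h j ^ 2) := by
    rw [← sqrt_mul k.cast_nonneg, le_sqrt (by positivity) (by positivity)]
    calc (∑ j ∈ s, |h j|) ^ 2 ≤ #s * ∑ j ∈ s, |h j| ^ 2 := sq_sum_le_card_mul_sum_sq
      _ ≤ k * ∑ j, h j ^ 2 := by
        simp only [sq_abs]
        gcongr
        exact subset_univ s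
  calc ∑ j, |h j| = ∑ j ∈ s, |h j| + ∑ j ∈ sᶜ, |h j| := (sum_add_sum_compl s _).symm
    _ ≤ (1 + C) * ∑ j ∈ s, |h j| := by linarith
    _ ≤ (1 + C) * √k * √(∑ j, h j ^ 2) := by rw [mul_assoc]; gcongr

theorem four_mul_sqrt_mul_div_lt {κ₁ κ₂ k x n : ℝ} (hκ₁ : 0 < κ₁) (hκ₂ : 0 ≤ κ₂) (hn : 0 < n)
    (h : n > 16 * (κ₂ / κ₁) ^ 2 * k * x) : 4 * κ₂ * √(k * (x / n)) < κ₁ := by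
  rw [← mul_div_assoc, ← sqrt_sq (by positivity : 0 ≤ 4 * κ₂), ← sqrt_mul (sq_nonneg _),
    sqrt_lt' hκ₁, ← mul_div_assoc, div_lt_iff₀ hn]
  rw [div_pow, gt_iff_lt] at h
  have := mul_lt_mul_of_pos_left h (pow_pos hκ₁ 2)
  field_simp at this
  linarith

theorem sum_abs_smul_le {ι : Type*} [Fintype ι] (h : ι → ℝ) {t : ℝ} (ht : t ∈ Icc (0 : ℝ) 1) :
    ∑ j, |(t • h) j| ≤ ∑ j, |h j| := by
  simp only [Pi.smul_apply, smul_eq_mul, abs_mul, ← mul_sum, abs_of_nonneg ht.1]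
  exact mul_le_of_le_one_left (sum_nonneg fun j _ => abs_nonneg _) ht.2

theorem sq_mul_le_of_restricted_eigenvalue {Q E L κ₁ κ₂ r k : ℝ} (hκ₂ : 0 ≤ κ₂) (hk : 0 ≤ k)
    (hE : 0 ≤ E) (hQ : 0 ≤ Q) (hc : 0 ≤ κ₁ - 4 * κ₂ * √(k * r))
    (hRE : √Q ≥ κ₁ * √E - κ₂ * √r * L) (hL : L ≤ 4 * √k * √E) :
    (κ₁ - 4 * κ₂ * √(k * r)) ^ 2 * E ≤ Q := by
  have : (κ₁ - 4 * κ₂ * √(k * r)) * √E ≤ √Q := calc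
    _ = κ₁ * √E - κ₂ * √r * (4 * √k * √E) := by rw [sqrt_mul hk]; ring
    _ ≤ κ₁ * √E - κ₂ * √r * L := by gcongr
    _ ≤ √Q := hRE
  rwa [le_sqrt (by positivity) hQ, mul_pow, sq_sqrt hE] at this

theorem excess_loss_ge_of_le_deriv2 {ι Y : Type*} [Fintype ι] {f df d2f : ℝ → Y → ℝ}
    (hderiv1 : ∀ (z : Y) (t : ℝ), HasDerivAt (fun u => f u z) (df t z) t)
    (hderiv2 : ∀ (z : Y) (t : ℝ), HasDerivAt (fun u => df u z) (d2f t z) t)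
    (a b : ι → ℝ) (y : ι → Y) {M c : ℝ} (hc : 0 ≤ c)
    (hM : ∀ i, ∀ t ∈ Icc (0 : ℝ) 1, M ≤ d2f (a i + t * b i) (y i)) :
    c * ∑ i, f (a i + b i) (y i) - c * ∑ i, f (a i) (y i) - c * ∑ i, df (a i) (y i) * b i ≥
      M / 2 * (c * ∑ i, b i ^ 2) := by
  have htaylor := fun i => taylor_lower_bound_along_segment (hderiv1 (y i)) (hderiv2 (y i)) (hM i)
  calc _ = c * ∑ i, (f (a i + b i) (y i) - f (a i) (y i) - df (a i) (y i) * b i) := by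
        rw [sum_sub_distrib, sum_sub_distrib]; ring
    _ ≥ c * ∑ i, M / 2 * b i ^ 2 := by
        gcongr with i; linarith [htaylor i]
    _ = M / 2 * (c * ∑ i, b i ^ 2) := by rw [← mul_sum]; ring

theorem rsc_from_restricted_eigenvalue_lasso_analog_general {Y : Type*} (n p k : ℕ)
    (hn : 0 < n)
    (w : Fin n → Fin p → ℝ) (y : Fin n → Y) (f df d2f : ℝ → Y → ℝ)
    (hderiv1 : ∀ (z : Y) (t : ℝ), HasDerivAt (fun u => f u z) (df t z) t)
    (hderiv2 : ∀ (z : Y) (t : ℝ), HasDerivAt (fun u => df u z) (d2f t z) t)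
    (Lw : (Fin p → ℝ) → ℝ) (Sw : (Fin p → ℝ) → Fin p → ℝ)
    (hL : ∀ β, Lw β = (1 / n) * ∑ i, f (∑ j, w i j * β j) (y i))
    (hS : ∀ β j, Sw β j = (1 / n) * ∑ i, df (∑ j', w i j' * β j') (y i) * w i j)
    (βstar : Fin p → ℝ) (M₃ κ₁ κ₂ : ℝ)
    (hM₃ : 0 < M₃) (hκ₁ : 0 < κ₁) (hκ₂ : 0 < κ₂)
    (hsupp : (Finset.univ.filter (fun j => βstar j ≠ 0)).card ≤ k)
    (hlb : ∀ (i : Fin n) (h' : Fin p → ℝ), (∑ j, |h' j|) ≤ 3 * ∑ j, |βstar j| →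
      d2f (∑ j, w i j * (βstar j + h' j)) (y i) ≥ M₃)
    (hRE : ∀ v : Fin p → ℝ,
      Real.sqrt ((1 / n) * ∑ i, (∑ j, w i j * v j) ^ 2) ≥
        κ₁ * Real.sqrt (∑ j, (v j) ^ 2) -
          κ₂ * Real.sqrt (Real.log p / n) * ∑ j, |v j|)
    (hsample : (n : ℝ) > 16 * (κ₂ / κ₁) ^ 2 * k * Real.log p) :
    0 < (M₃ / 2) * (κ₁ - 4 * κ₂ * Real.sqrt (k * Real.log p / n)) ^ 2 ∧
      ∀ h : Fin p → ℝ,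
        (∑ j ∈ (Finset.univ.filter (fun j => βstar j ≠ 0))ᶜ, |h j| ≤
          3 * ∑ j ∈ Finset.univ.filter (fun j => βstar j ≠ 0), |h j|) →
        (∑ j, |h j|) ≤ 3 * ∑ j, |βstar j| →
        Lw (βstar + h) - Lw βstar - (∑ j, Sw βstar j * h j) ≥
          (M₃ / 2) * (κ₁ - 4 * κ₂ * Real.sqrt (k * Real.log p / n)) ^ 2 *
            ∑ j, (h j) ^ 2 := by
  rw [mul_div_assoc]
  set c := κ₁ - 4 * κ₂ * √(k * (Real.log p / n))
  have hc : 0 < c := sub_pos.2 (four_mul_sqrt_mul_div_lt hκ₁ hκ₂.le (by exact_mod_cast hn) hsample)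
  refine ⟨by positivity, fun h hcone hball => ?_⟩
  have hl1 : ∑ j, |h j| ≤ 4 * √k * √(∑ j, h j ^ 2) := by
    simpa only [show (1 : ℝ) + 3 = 4 by norm_num] using
      sum_abs_le_of_mem_cone (by norm_num) hsupp hcone
  have hquad : c ^ 2 * ∑ j, h j ^ 2 ≤ (1 / n) * ∑ i, (w i ⬝ᵥ h) ^ 2 :=
    sq_mul_le_of_restricted_eigenvalue hκ₂.le k.cast_nonneg (by positivity) (by positivity)
      hc.le (hRE h) hl1
  have hcurv : ∀ i, ∀ t ∈ Icc (0 : ℝ) 1, M₃ ≤ d2f (w i ⬝ᵥ βstar + t * w i ⬝ᵥ h) (y i) :=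
    fun i t ht => by
      have := hlb i (t • h) ((sum_abs_smul_le h ht).trans hball)
      rwa [ge_iff_le, show ∑ j, w i j * (βstar j + (t • h) j) = w i ⬝ᵥ (βstar + t • h) from rfl,
        dotProduct_add, dotProduct_smul, smul_eq_mul] at this
  have hgrad : ∑ j, Sw βstar j * h j = (1 / n) * ∑ i, df (w i ⬝ᵥ βstar) (y i) * (w i ⬝ᵥ h) := by
    simp only [hS, dotProduct, sum_mul, mul_sum]
    rw [sum_comm]
    exact sum_congr rfl fun i _ => sum_congr rfl fun j _ => by ring
  have hloss : ∀ β, Lw β = (1 / n) * ∑ i, f (w i ⬝ᵥ β) (y i) := hL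
  simp only [hloss, hgrad, dotProduct_add]
  calc _ ≥ M₃ / 2 * ((1 / n) * ∑ i, (w i ⬝ᵥ h) ^ 2) :=
        excess_loss_ge_of_le_deriv2 hderiv1 hderiv2 _ _ y (by positivity) hcurv
    _ ≥ M₃ / 2 * (c ^ 2 * ∑ j, h j ^ 2) := by gcongr
    _ = _ := by ring

/-- Deterministic core of the restricted strong convexity lemma for the Lasso analog.
If the second derivative of the loss is bounded below by `M₃` on the relevant ℓ1 ball,
the noisy design satisfies `√((1/n)Σᵢ⟨wᵢ, v⟩²) ≥ κ₁‖v‖₂ − κ₂√(log p / n)‖v‖₁` for all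
`v`, and `n > 16(κ₂/κ₁)² k log p`, then for every `h` in the cone `‖h_{sᶜ}‖₁ ≤ 3‖h_s‖₁`
with `‖h‖₁ ≤ 3‖β*‖₁`, `L_w(β* + h) − L_w(β*) − ⟨S_w(β*), h⟩ ≥ τ_L‖h‖₂²` with
`τ_L = (M₃/2)(κ₁ − 4κ₂√(k log p / n))² > 0`. -/
theorem rsc_from_restricted_eigenvalue_lasso_analog {Y : Type*} (n p k : ℕ)
    (hn : 0 < n) (hp : 0 < p) (hk : 1 ≤ k)
    (w : Fin n → Fin p → ℝ) (y : Fin n → Y) (f df d2f : ℝ → Y → ℝ)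
    (hderiv1 : ∀ (z : Y) (t : ℝ), HasDerivAt (fun u => f u z) (df t z) t)
    (hderiv2 : ∀ (z : Y) (t : ℝ), HasDerivAt (fun u => df u z) (d2f t z) t)
    (Lw : (Fin p → ℝ) → ℝ) (Sw : (Fin p → ℝ) → Fin p → ℝ)
    (hL : ∀ β, Lw β = (1 / n) * ∑ i, f (∑ j, w i j * β j) (y i))
    (hS : ∀ β j, Sw β j = (1 / n) * ∑ i, df (∑ j', w i j' * β j') (y i) * w i j)
    (βstar : Fin p → ℝ) (M₃ κ₁ κ₂ : ℝ)
    (hM₃ : 0 < M₃) (hκ₁ : 0 < κ₁) (hκ₂ : 0 < κ₂)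
    (hsupp : (Finset.univ.filter (fun j => βstar j ≠ 0)).card ≤ k)
    (hlb : ∀ (i : Fin n) (h' : Fin p → ℝ), (∑ j, |h' j|) ≤ 3 * ∑ j, |βstar j| →
      d2f (∑ j, w i j * (βstar j + h' j)) (y i) ≥ M₃)
    (hRE : ∀ v : Fin p → ℝ,
      Real.sqrt ((1 / n) * ∑ i, (∑ j, w i j * v j) ^ 2) ≥
        κ₁ * Real.sqrt (∑ j, (v j) ^ 2) -
          κ₂ * Real.sqrt (Real.log p / n) * ∑ j, |v j|)
    (hlogp : 0 < Real.log p)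
    (hsample : (n : ℝ) > 16 * (κ₂ / κ₁) ^ 2 * k * Real.log p) :
    0 < (M₃ / 2) * (κ₁ - 4 * κ₂ * Real.sqrt (k * Real.log p / n)) ^ 2 ∧
      ∀ h : Fin p → ℝ,
        (∑ j ∈ (Finset.univ.filter (fun j => βstar j ≠ 0))ᶜ, |h j| ≤
          3 * ∑ j ∈ Finset.univ.filter (fun j => βstar j ≠ 0), |h j|) →
        (∑ j, |h j|) ≤ 3 * ∑ j, |βstar j| →
        Lw (βstar + h) - Lw βstar - (∑ j, Sw βstar j * h j) ≥
          (M₃ / 2) * (κ₁ - 4 * κ₂ * Real.sqrt (k * Real.log p / n)) ^ 2 *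
            ∑ j, (h j) ^ 2 :=
  rsc_from_restricted_eigenvalue_lasso_analog_general n p k hn w y f df d2f hderiv1 hderiv2 Lw Sw hL
    hS βstar M₃ κ₁ κ₂ hM₃ hκ₁ hκ₂ hsupp hlb hRE hsample
end
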